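/- With the same setup (strictly increasing (dₙ), multi-digits bₙ, ε > 0, 1/2 < α < 1, N > max{(1+ε)^{1/α}, ε^{1/(α−1)}}, multi-digit values B₁,…,B_{N²}), the set A(B₁,…,B_{N²},ε) := {x ∈ (0,1) : b_k(x)=B_k for k ≤ N², and 1 − ε/n^α ≤ C(x,n)/(2n+1) < 1 for all n ≥ N} is nonempty. -/

import Mathlib

/-- The `k`-th decimal digit of `x` (convention: the expansion ending in zeros). -/
noncomputable def digit (x : ℝ) (k : ℕ) : ℕ := (⌊x * 10 ^ k⌋ % 10).toNat

/-- `Dsum d n = d 1 + ⋯ + d n`, with `Dsum d 0 = 0`. -/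
def Dsum (d : ℕ → ℕ) (n : ℕ) : ℕ := ∑ k ∈ Finset.Icc 1 n, d k

/-- The `n`-th multi-digit of `x` with respect to the sequence `d`. -/
noncomputable def mdigit (d : ℕ → ℕ) (n : ℕ) (x : ℝ) : ℕ :=
  ∑ k ∈ Finset.Icc (Dsum d (n - 1) + 1) (Dsum d n), 10 ^ (Dsum d n - k) * digit x k

/-- The number of maximal multi-digits of `x` in the block `(n², (n+1)²]`. -/
noncomputable def Ccount (d : ℕ → ℕ) (x : ℝ) (n : ℕ) : ℕ :=
  ((Finset.Ioc (n ^ 2) ((n + 1) ^ 2)).filter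
    (fun k => mdigit d k x = 10 ^ (d k) - 1)).card

/-! Keep the prescribed multi-digits `B` up to index `N²` and beyond it make every multi-digit
maximal except those with square index, which are `0`. A block `(n², (n+1)²]` contains exactly one
square, so `C(x, n) = 2n`, and `2n / (2n+1) ≥ 1 - ε / n^α` because `n^α < ε n` once
`n > ε^(1/(α-1))`. The zero multi-digits recur forever, so the decimal expansion built from these
values does not end in `9`s and `digit` reads it back. -/

namespace Real

variable {b : ℕ}

theorem ofDigits_lt_one {a : ℕ → Fin b} (h : ∃ i, (a i : ℕ) + 1 < b) : ofDigits a < 1 := by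
  obtain ⟨i, hi⟩ := h
  have hb : 1 < b := by omega
  rw [← ofDigits_const_last_eq_one' hb]
  refine Summable.tsum_lt_tsum (i := i) (fun n => ?_) ?_ summable_ofDigitsTerm
    summable_ofDigitsTerm
  · unfold ofDigitsTerm
    gcongr
    exact_mod_cast Nat.le_sub_one_of_lt (a n).isLt
  · unfold ofDigitsTerm
    gcongr
    exact_mod_cast Nat.lt_sub_of_add_lt hi

theorem mul_ofDigits (a : ℕ → Fin b) :
    b * ofDigits a = a 0 + ofDigits (fun i => a (i + 1)) := by
  have : (b : ℝ) ≠ 0 := by exact_mod_cast (Fin.pos (a 0)).ne'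
  rw [ofDigits_eq_sum_add_ofDigits a 1]
  simp only [Finset.sum_range_one, ofDigitsTerm, zero_add, pow_one]
  field_simp

theorem exists_pow_mul_ofDigits_eq (a : ℕ → Fin b) (n : ℕ) :
    ∃ m : ℤ, b ^ n * ofDigits a = m + ofDigits (fun i => a (i + n)) := by
  induction n with
  | zero => exact ⟨0, by simp⟩
  | succ n ih =>
    obtain ⟨m, hm⟩ := ih
    refine ⟨b * m + a n, ?_⟩
    have := mul_ofDigits (fun i => a (i + n))
    simp only [zero_add, add_assoc, add_comm 1] at this
    rw [pow_succ', mul_assoc, hm]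
    push_cast
    linear_combination this

theorem floor_ofDigits_mul_pow_emod {a : ℕ → Fin b} {k : ℕ}
    (ha : ∃ i, k < i ∧ (a i : ℕ) + 1 < b) :
    ⌊ofDigits a * b ^ (k + 1)⌋ % b = a k := by
  obtain ⟨m, hm⟩ := exists_pow_mul_ofDigits_eq a k
  have hshift := mul_ofDigits (fun i => a (i + k))
  simp only [zero_add, add_assoc, add_comm 1] at hshift
  obtain ⟨i, hki, hi⟩ := ha
  have htail : ofDigits (fun j => a (j + (k + 1))) < 1 :=
    ofDigits_lt_one ⟨i - (k + 1), by rwa [Nat.sub_add_cancel hki]⟩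
  have hsplit : ofDigits a * b ^ (k + 1)
      = (b * m + a k : ℤ) + ofDigits (fun i => a (i + (k + 1))) := by
    push_cast
    linear_combination (b : ℝ) * hm + hshift
  have hfloor : ⌊ofDigits a * b ^ (k + 1)⌋ = b * m + a k := by
    rw [hsplit, Int.floor_intCast_add, Int.floor_eq_zero_iff.mpr ⟨ofDigits_nonneg _, htail⟩,
      add_zero]
  rw [hfloor, Int.mul_add_emod_self_left]
  exact Int.emod_eq_of_lt (by positivity) (by exact_mod_cast (a k).isLt)

end Real

open Finset

theorem Nat.sum_range_pow_mul_div_pow_mod (b m D : ℕ) :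
    ∑ j ∈ range D, b ^ j * (m / b ^ j % b) = m % b ^ D := by
  induction D with
  | zero => simp [Nat.mod_one]
  | succ D ih => rw [sum_range_succ, ih, Nat.mod_pow_succ, add_comm]

theorem sum_Icc_sub_eq_sum_range {M : Type*} [AddCommMonoid M] (f : ℕ → M) (a D : ℕ) :
    ∑ k ∈ Icc (a + 1) (a + D), f (a + D - k) = ∑ j ∈ range D, f j := by
  refine sum_nbij' (fun k => a + D - k) (fun j => a + D - j) ?_ ?_ ?_ ?_ (fun _ _ => rfl) <;>
    intro k hk <;> simp only [mem_Icc, mem_range] at hk ⊢ <;> omega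

section Blocks

variable (d : ℕ → ℕ)

theorem Dsum_mono : Monotone (Dsum d) :=
  fun _ _ h => sum_le_sum_of_subset (Icc_subset_Icc_right h)

theorem Dsum_eq_Dsum_sub_one_add {n : ℕ} (hn : 1 ≤ n) : Dsum d n = Dsum d (n - 1) + d n := by
  obtain ⟨m, rfl⟩ := Nat.exists_eq_add_of_le' hn
  rw [Dsum, Dsum, sum_Icc_succ_top (by omega), Nat.add_sub_cancel]

theorem le_Dsum {d : ℕ → ℕ} (hdpos : ∀ n, 1 ≤ n → 0 < d n) (n : ℕ) : n ≤ Dsum d n := by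
  simpa [Dsum] using sum_le_sum fun i hi => Nat.succ_le_of_lt (hdpos i (mem_Icc.mp hi).1)

noncomputable def blockIdx (k : ℕ) : ℕ := sInf {n | k ≤ Dsum d n}

theorem blockIdx_eq {n k : ℕ} (hn : 1 ≤ n) (h1 : Dsum d (n - 1) < k) (h2 : k ≤ Dsum d n) :
    blockIdx d k = n := by
  have hle : blockIdx d k ≤ n := Nat.sInf_le h2
  have hmem : k ≤ Dsum d (blockIdx d k) := Nat.sInf_mem (s := {n | k ≤ Dsum d n}) ⟨n, h2⟩
  by_contra hne
  have := Dsum_mono d (show blockIdx d k ≤ n - 1 by omega)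
  omega

/-- Entry `i` is the decimal digit at position `i + 1`, since `Real.ofDigits` starts at `0`. -/
noncomputable def blockDigits (v : ℕ → ℕ) (i : ℕ) : Fin 10 :=
  Fin.ofNat 10 (v (blockIdx d (i + 1)) / 10 ^ (Dsum d (blockIdx d (i + 1)) - (i + 1)))

theorem blockDigits_val (v : ℕ → ℕ) {n k : ℕ} (hn : 1 ≤ n) (h1 : Dsum d (n - 1) < k)
    (h2 : k ≤ Dsum d n) : (blockDigits d v (k - 1) : ℕ) = v n / 10 ^ (Dsum d n - k) % 10 := by
  obtain ⟨i, rfl⟩ : ∃ i, k = i + 1 := ⟨k - 1, by omega⟩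
  simp [blockDigits, blockIdx_eq d hn h1 h2]

end Blocks

theorem digit_ofDigits {a : ℕ → Fin 10} {k : ℕ} (ha : ∃ i : ℕ, k < i ∧ (a i : ℕ) < 9) :
    digit (Real.ofDigits a) (k + 1) = a k := by
  obtain ⟨i, hki, hi⟩ := ha
  have := Real.floor_ofDigits_mul_pow_emod (a := a) (k := k) ⟨i, hki, by omega⟩
  push_cast at this
  rw [digit, this]
  simp

theorem mdigit_ofDigits_blockDigits (d v : ℕ → ℕ)
    (hv : ∀ m, ∃ i, m < i ∧ (blockDigits d v i : ℕ) < 9) {n : ℕ} (hn : 1 ≤ n) :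
    mdigit d n (Real.ofDigits (blockDigits d v)) = v n % 10 ^ d n := by
  have hterm : ∀ k ∈ Icc (Dsum d (n - 1) + 1) (Dsum d n),
      10 ^ (Dsum d n - k) * digit (Real.ofDigits (blockDigits d v)) k
        = 10 ^ (Dsum d n - k) * (v n / 10 ^ (Dsum d n - k) % 10) := by
    intro k hk
    rw [mem_Icc] at hk
    obtain ⟨i, rfl⟩ : ∃ i, k = i + 1 := ⟨k - 1, by omega⟩
    obtain ⟨j, hij, hj⟩ := hv i
    rw [digit_ofDigits ⟨j, hij, hj⟩, ← blockDigits_val d v hn (by omega) hk.2, Nat.add_sub_cancel]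
  rw [mdigit, sum_congr rfl hterm, Dsum_eq_Dsum_sub_one_add d hn,
    sum_Icc_sub_eq_sum_range (fun j => 10 ^ j * (v n / 10 ^ j % 10)),
    Nat.sum_range_pow_mul_div_pow_mod]

theorem blockDigits_Dsum_sub_one (d v : ℕ → ℕ) {n : ℕ} (hn : 1 ≤ n) (hd : 0 < d n) :
    (blockDigits d v (Dsum d n - 1) : ℕ) = v n % 10 := by
  rw [blockDigits_val d v hn (by rw [Dsum_eq_Dsum_sub_one_add d hn]; omega) le_rfl,
    Nat.sub_self, pow_zero, Nat.div_one]

theorem exists_mem_Ioo_mdigit_eq {d : ℕ → ℕ} (hdpos : ∀ n, 1 ≤ n → 0 < d n) {v : ℕ → ℕ}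
    (hv : ∀ n, 1 ≤ n → v n < 10 ^ d n) (hzero : {n | v n = 0}.Infinite)
    (hne : ∃ n, 1 ≤ n ∧ v n ≠ 0) :
    ∃ x ∈ Set.Ioo (0 : ℝ) 1, ∀ n, 1 ≤ n → mdigit d n x = v n := by
  have hnon9 : ∀ m, ∃ i, m < i ∧ (blockDigits d v i : ℕ) < 9 := by
    intro m
    obtain ⟨n, hn0, hmn⟩ := hzero.exists_gt (m + 1)
    have := le_Dsum hdpos n
    refine ⟨Dsum d n - 1, by omega, ?_⟩
    rw [blockDigits_Dsum_sub_one d v (by omega) (hdpos n (by omega)), Set.mem_ofPred.mp hn0]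
    norm_num
  have hmd : ∀ n, 1 ≤ n → mdigit d n (Real.ofDigits (blockDigits d v)) = v n := fun n hn => by
    rw [mdigit_ofDigits_blockDigits d v hnon9 hn, Nat.mod_eq_of_lt (hv n hn)]
  refine ⟨_, ⟨?_, ?_⟩, hmd⟩
  · obtain ⟨n, hn, hvn⟩ := hne
    refine (Real.ofDigits_nonneg _).lt_of_ne fun h0 => hvn ?_
    rw [← hmd n hn, ← h0]
    simp [mdigit, digit]
  · obtain ⟨i, -, hi⟩ := hnon9 0
    exact Real.ofDigits_lt_one ⟨i, by omega⟩

theorem card_filter_not_isSquare_Ioc (n : ℕ) :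
    ((Ioc (n ^ 2) ((n + 1) ^ 2)).filter (fun k => ¬ IsSquare k)).card = 2 * n := by
  have hsq : ∀ k ∈ Ioc (n ^ 2) ((n + 1) ^ 2), IsSquare k ↔ k = (n + 1) ^ 2 := by
    intro k hk
    rw [mem_Ioc] at hk
    refine ⟨fun ⟨r, hr⟩ => ?_, fun h => ⟨n + 1, by rw [h, sq]⟩⟩
    by_contra hne
    exact Nat.not_exists_sq' hk.1 (lt_of_le_of_ne hk.2 hne) ⟨r, by rw [hr, sq]⟩
  rw [filter_congr fun k hk => not_congr (hsq k hk), filter_ne', card_erase_of_mem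
    (right_mem_Ioc.mpr (Nat.pow_lt_pow_left n.lt_add_one two_ne_zero)), Nat.card_Ioc,
    add_sq]
  omega

def extendMdigits (d : ℕ → ℕ) (N : ℕ) (B : ℕ → ℕ) (n : ℕ) : ℕ :=
  if n ≤ N ^ 2 then B n else if IsSquare n then 0 else 10 ^ d n - 1

section Extension

variable {d : ℕ → ℕ} {N : ℕ} {B : ℕ → ℕ}

theorem extendMdigits_lt (hdpos : ∀ n, 1 ≤ n → 0 < d n)
    (hB : ∀ k, 1 ≤ k → k ≤ N ^ 2 → B k ≤ 10 ^ (d k) - 1) (n : ℕ) (hn : 1 ≤ n) :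
    extendMdigits d N B n < 10 ^ d n := by
  have := Nat.one_lt_pow (hdpos n hn).ne' (by norm_num : 1 < 10)
  unfold extendMdigits
  split_ifs with h
  · have := hB n hn h; omega
  all_goals omega

theorem infinite_setOf_extendMdigits_eq_zero : {n | extendMdigits d N B n = 0}.Infinite := by
  refine Set.infinite_of_forall_exists_gt fun m => ⟨(N + m + 1) ^ 2, ?_, ?_⟩
  · have : N ^ 2 < (N + m + 1) ^ 2 := Nat.pow_lt_pow_left (by omega) two_ne_zero
    simp [extendMdigits, this.not_ge, IsSquare.sq]
  · nlinarith [Nat.le_self_pow two_ne_zero (N + m + 1)]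

theorem extendMdigits_eq_pow_sub_one_iff (hdpos : ∀ n, 1 ≤ n → 0 < d n) {k : ℕ}
    (hk : N ^ 2 < k) : extendMdigits d N B k = 10 ^ d k - 1 ↔ ¬ IsSquare k := by
  have := Nat.one_lt_pow (hdpos k (by omega)).ne' (by norm_num : 1 < 10)
  unfold extendMdigits
  split_ifs with h1 h2
  · omega
  · simp only [h2, not_true_eq_false, iff_false]
    omega
  · simp only [h2, not_false_eq_true]

theorem exists_extendMdigits_ne_zero (hdpos : ∀ n, 1 ≤ n → 0 < d n) (hN : 0 < N) :
    ∃ n, 1 ≤ n ∧ extendMdigits d N B n ≠ 0 := by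
  have hlt : N ^ 2 < N ^ 2 + 1 := Nat.lt_add_one _
  have hsq : ¬ IsSquare (N ^ 2 + 1) := fun ⟨r, hr⟩ =>
    Nat.not_exists_sq' hlt (by nlinarith) ⟨r, by rw [hr, sq]⟩
  refine ⟨N ^ 2 + 1, by omega, ?_⟩
  have := Nat.one_lt_pow (hdpos (N ^ 2 + 1) (by omega)).ne' (by norm_num : 1 < 10)
  rw [(extendMdigits_eq_pow_sub_one_iff hdpos hlt).mpr hsq]
  omega

theorem Ccount_eq_of_mdigit_eq_extendMdigits (hdpos : ∀ n, 1 ≤ n → 0 < d n) {x : ℝ}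
    (hx : ∀ n, 1 ≤ n → mdigit d n x = extendMdigits d N B n) {n : ℕ} (hn : N ≤ n) :
    Ccount d x n = 2 * n := by
  rw [Ccount, ← card_filter_not_isSquare_Ioc n]
  refine congrArg card (filter_congr fun k hk => ?_)
  have hNk : N ^ 2 < k := lt_of_le_of_lt (Nat.pow_le_pow_left hn 2) (mem_Ioc.mp hk).1
  rw [hx k (by omega), extendMdigits_eq_pow_sub_one_iff hdpos hNk]

end Extension

theorem rpow_lt_mul_of_rpow_inv_sub_one_lt {ε α n : ℝ} (hε : 0 < ε) (hα : α < 1)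
    (hn : ε ^ (1 / (α - 1)) < n) : n ^ α < ε * n := by
  have hn0 : 0 < n := (Real.rpow_pos_of_pos hε _).trans hn
  have hlt : n ^ (α - 1) < ε := by
    calc n ^ (α - 1) < (ε ^ (1 / (α - 1))) ^ (α - 1) :=
          Real.rpow_lt_rpow_of_neg (Real.rpow_pos_of_pos hε _) hn (by linarith)
      _ = ε := by
          rw [← Real.rpow_mul hε.le, one_div_mul_cancel (by linarith), Real.rpow_one]
  calc n ^ α = n ^ (α - 1) * n := by rw [← Real.rpow_add_one hn0.ne', sub_add_cancel]
    _ < ε * n := by gcongr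

theorem one_sub_div_rpow_le_two_mul_div {ε α n : ℝ} (hε : 0 < ε) (hα : α < 1)
    (hn : ε ^ (1 / (α - 1)) < n) : 1 - ε / n ^ α ≤ 2 * n / (2 * n + 1) := by
  have hn0 : 0 < n := (Real.rpow_pos_of_pos hε _).trans hn
  have hlt := rpow_lt_mul_of_rpow_inv_sub_one_lt hε hα hn
  have hpos : 0 < n ^ α := Real.rpow_pos_of_pos hn0 _
  have : 1 / (2 * n + 1) ≤ ε / n ^ α := by
    rw [div_le_div_iff₀ (by positivity) hpos]
    nlinarith
  calc 1 - ε / n ^ α ≤ 1 - 1 / (2 * n + 1) := by linarith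
    _ = 2 * n / (2 * n + 1) := by field_simp; ring

theorem stmt11_general (d : ℕ → ℕ) (hdpos : ∀ n, 1 ≤ n → 0 < d n)
    (ε α : ℝ) (N : ℕ) (B : ℕ → ℕ)
    (hε : 0 < ε) (hα2 : α < 1)
    (hN : (N : ℝ) > max ((1 + ε) ^ (1 / α)) (ε ^ (1 / (α - 1))))
    (hB : ∀ k, 1 ≤ k → k ≤ N ^ 2 → B k ≤ 10 ^ (d k) - 1) :
    Set.Nonempty {x : ℝ | x ∈ Set.Ioo (0 : ℝ) 1 ∧
      (∀ k, 1 ≤ k → k ≤ N ^ 2 → mdigit d k x = B k) ∧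
      ∀ n : ℕ, N ≤ n →
        1 - ε / (n : ℝ) ^ α ≤ (Ccount d x n : ℝ) / (2 * n + 1) ∧
        (Ccount d x n : ℝ) / (2 * n + 1) < 1} := by
  have hNε : ε ^ (1 / (α - 1)) < N := (le_max_right _ _).trans_lt hN
  have hN0 : 0 < N := by exact_mod_cast (Real.rpow_pos_of_pos hε _).trans hNε
  obtain ⟨x, hx, hmd⟩ := exists_mem_Ioo_mdigit_eq hdpos (extendMdigits_lt hdpos hB)
    infinite_setOf_extendMdigits_eq_zero (exists_extendMdigits_ne_zero hdpos hN0)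
  refine ⟨x, hx, fun k hk hkN => by rw [hmd k hk, extendMdigits, if_pos hkN], fun n hn => ?_⟩
  have hεn : ε ^ (1 / (α - 1)) < n := hNε.trans_le (by exact_mod_cast hn)
  rw [Ccount_eq_of_mdigit_eq_extendMdigits hdpos hmd hn]
  push_cast
  exact ⟨one_sub_div_rpow_le_two_mul_div hε hα2 hεn,
    (div_lt_one (by positivity)).mpr (by linarith)⟩

theorem stmt11 (d : ℕ → ℕ) (hdpos : ∀ n, 1 ≤ n → 0 < d n)
    (hdmono : ∀ n, 1 ≤ n → d n < d (n + 1))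
    (ε α : ℝ) (N : ℕ) (B : ℕ → ℕ)
    (hε : 0 < ε) (hα1 : 1 / 2 < α) (hα2 : α < 1)
    (hN : (N : ℝ) > max ((1 + ε) ^ (1 / α)) (ε ^ (1 / (α - 1))))
    (hB : ∀ k, 1 ≤ k → k ≤ N ^ 2 → B k ≤ 10 ^ (d k) - 1) :
    Set.Nonempty {x : ℝ | x ∈ Set.Ioo (0 : ℝ) 1 ∧
      (∀ k, 1 ≤ k → k ≤ N ^ 2 → mdigit d k x = B k) ∧
      ∀ n : ℕ, N ≤ n →
        1 - ε / (n : ℝ) ^ α ≤ (Ccount d x n : ℝ) / (2 * n + 1) ∧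
        (Ccount d x n : ℝ) / (2 * n + 1) < 1} :=
  stmt11_general d hdpos ε α N B hε hα2 hN hB
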